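/- arXiv:2401.03942 — 5 statements merged into one kernel-verified Lean document; each statement's English description precedes it below -/
import Mathlib

section
/- There exists a subset U of L²_⋆(0,2) and an N ∈ ℕ such that conv(U_N) ≠ (conv U)_N. Concretely, for T = 2 and U = {χ_{[0,1]}, χ_{[1,2]}}, one has U_N = ∅ for every odd N, while (1/2)·χ_{[0,2]} ∈ (conv U)_N for all N; in particular conv(U_N) is strictly contained in (conv U)_N for odd N. -/
open MeasureTheory Set Filter

/-- Functions that are (pointwise) constant on each open cell of the equidistant grid with
`N` cells of `(0,T)`; these represent the discretized functions in `L²_⋆(0,T)_N`. -/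
def PCFun (T : ℝ) (N : ℕ) : Set (ℝ → ℝ) :=
  {f | ∃ v : Fin N → ℝ, ∀ i : Fin N,
    ∀ t ∈ Set.Ioo ((i : ℝ) * T / N) (((i : ℝ) + 1) * T / N), f t = v i}

lemma stmt5_empty (k : ℕ) (f : ℝ → ℝ)
    (hfU : f ∈ ({Set.indicator (Set.Ico (0:ℝ) 1) (fun _ => (1:ℝ)),
           Set.indicator (Set.Ico (1:ℝ) 2) (fun _ => (1:ℝ))} : Set (ℝ → ℝ)))
    (hf : f ∈ PCFun 2 (2*k+1)) : False := by
  obtain ⟨v, hv⟩ := hf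
  set N : ℕ := 2 * k + 1 with hNdef
  have hN : (0:ℝ) < N := by positivity
  set i : Fin N := ⟨k, by omega⟩ with hi
  have hic : ((i : Fin N) : ℝ) = (k : ℝ) := rfl
  set a : ℝ := (k : ℝ) * 2 / N with ha
  set b : ℝ := ((k : ℝ) + 1) * 2 / N with hb
  have ha1 : a < 1 := by
    rw [ha, div_lt_one hN]; push_cast [hNdef]; linarith
  have ha0 : 0 ≤ a := by positivity
  have hb1 : 1 < b := by
    rw [hb, lt_div_iff₀ hN]; push_cast [hNdef]; linarith
  have hb2 : b ≤ 2 := by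
    rw [hb, div_le_iff₀ hN]; push_cast [hNdef]
    nlinarith [Nat.cast_nonneg (α := ℝ) k]
  set ta : ℝ := (a + 1) / 2 with hta
  set tb : ℝ := (1 + b) / 2 with htb
  have h1 : a < ta := by rw [hta]; linarith
  have h2 : ta < 1 := by rw [hta]; linarith
  have h3 : 1 < tb := by rw [htb]; linarith
  have h4 : tb < b := by rw [htb]; linarith
  have h5 : tb < 2 := lt_of_lt_of_le h4 hb2
  have hmem_a : ta ∈ Set.Ioo ((i : ℝ) * 2 / N) (((i : ℝ) + 1) * 2 / N) := by
    rw [hic, ← ha, ← hb]; exact ⟨h1, lt_trans h2 hb1⟩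
  have hmem_b : tb ∈ Set.Ioo ((i : ℝ) * 2 / N) (((i : ℝ) + 1) * 2 / N) := by
    rw [hic, ← ha, ← hb]; exact ⟨lt_trans ha1 h3, h4⟩
  have hva := hv i ta hmem_a
  have hvb := hv i tb hmem_b
  have hne : f ta ≠ f tb := by
    rcases hfU with h | h <;> subst h
    · rw [Set.indicator_of_mem (by constructor <;> linarith),
        Set.indicator_of_notMem (by simp only [Set.mem_Ico]; push_neg; intro; linarith)]
      norm_num
    · rw [Set.indicator_of_notMem (by simp only [Set.mem_Ico]; push_neg; intro; linarith),
        Set.indicator_of_mem (by constructor <;> linarith)]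
      norm_num
  exact hne (hva.trans hvb.symm)

lemma stmt5_mem (N : ℕ) :
    (fun t => (1/2) * Set.indicator (Set.Ico (0:ℝ) 2) (fun _ => (1:ℝ)) t)
    ∈ convexHull ℝ ({Set.indicator (Set.Ico (0:ℝ) 1) (fun _ => (1:ℝ)),
           Set.indicator (Set.Ico (1:ℝ) 2) (fun _ => (1:ℝ))} : Set (ℝ → ℝ)) ∩ PCFun 2 N := by
  set f1 : ℝ → ℝ := Set.indicator (Set.Ico (0:ℝ) 1) (fun _ => (1:ℝ)) with hf1
  set f2 : ℝ → ℝ := Set.indicator (Set.Ico (1:ℝ) 2) (fun _ => (1:ℝ)) with hf2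
  constructor
  · have key : (fun t => (1/2) * Set.indicator (Set.Ico (0:ℝ) 2) (fun _ => (1:ℝ)) t)
        = (1/2 : ℝ) • f1 + (1/2 : ℝ) • f2 := by
      funext t
      show (1/2) * Set.indicator (Set.Ico (0:ℝ) 2) (fun _ => (1:ℝ)) t
          = (1/2 : ℝ) * f1 t + (1/2 : ℝ) * f2 t
      rw [hf1, hf2]
      rcases lt_or_ge t 1 with h1 | h1
      · rcases lt_or_ge t 0 with h0 | h0
        · rw [Set.indicator_of_notMem (s := Set.Ico (0:ℝ) 2) (by simp [Set.mem_Ico]; intro; linarith),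
            Set.indicator_of_notMem (s := Set.Ico (0:ℝ) 1) (by simp [Set.mem_Ico]; intro; linarith),
            Set.indicator_of_notMem (s := Set.Ico (1:ℝ) 2) (by simp [Set.mem_Ico]; intro; linarith)]
          ring
        · rw [Set.indicator_of_mem (Set.mem_Ico.mpr ⟨h0, by linarith⟩),
            Set.indicator_of_mem (Set.mem_Ico.mpr ⟨h0, h1⟩),
            Set.indicator_of_notMem (s := Set.Ico (1:ℝ) 2) (by simp [Set.mem_Ico]; intro; linarith)]
          ring
      · rcases lt_or_ge t 2 with h2 | h2
        · rw [Set.indicator_of_mem (Set.mem_Ico.mpr ⟨by linarith, h2⟩),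
            Set.indicator_of_notMem (s := Set.Ico (0:ℝ) 1) (by simp [Set.mem_Ico]; intro; linarith),
            Set.indicator_of_mem (Set.mem_Ico.mpr ⟨h1, h2⟩)]
          ring
        · rw [Set.indicator_of_notMem (s := Set.Ico (0:ℝ) 2) (by simp [Set.mem_Ico]; intro; linarith),
            Set.indicator_of_notMem (s := Set.Ico (0:ℝ) 1) (by simp [Set.mem_Ico]; intro; linarith),
            Set.indicator_of_notMem (s := Set.Ico (1:ℝ) 2) (by simp [Set.mem_Ico]; intro; linarith)]
          ring
    rw [key]
    exact convex_convexHull ℝ _ (subset_convexHull ℝ _ (by left; rfl))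
      (subset_convexHull ℝ _ (by right; rfl)) (by norm_num) (by norm_num) (by norm_num)
  · refine ⟨fun _ => 1/2, fun i t ht => ?_⟩
    have hNpos : 0 < N := i.pos
    have hN : (0:ℝ) < N := by exact_mod_cast hNpos
    have h0 : (0:ℝ) ≤ t := by
      have : (0:ℝ) ≤ (i : ℝ) * 2 / N := by positivity
      linarith [ht.1]
    have h2 : t < 2 := by
      have hle : ((i : ℝ) + 1) * 2 / N ≤ 2 := by
        rw [div_le_iff₀ hN]
        have : ((i : ℕ) : ℝ) + 1 ≤ (N : ℝ) := by exact_mod_cast i.isLt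
        nlinarith
      linarith [ht.2]
    show (1/2) * Set.indicator (Set.Ico (0:ℝ) 2) (fun _ => (1:ℝ)) t = 1/2
    rw [Set.indicator_of_mem (Set.mem_Ico.mpr ⟨h0, h2⟩)]
    ring

/-- With `T = 2` and `U = {χ_{[0,1)}, χ_{[1,2)}}` (the characteristic functions `χ_{[0,1]}`,
`χ_{[1,2]}` taken with their half-open representatives, which agree a.e.), one has
`U_N = ∅` for every odd `N`, while `½·χ_{[0,2)} ∈ (conv U)_N` for all `N`; in particular
`conv(U_N) ⊊ (conv U)_N` for odd `N`. -/
theorem stmt5 :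
    ∃ U : Set (ℝ → ℝ),
      U = {Set.indicator (Set.Ico (0:ℝ) 1) (fun _ => (1:ℝ)),
           Set.indicator (Set.Ico (1:ℝ) 2) (fun _ => (1:ℝ))} ∧
      (∀ N : ℕ, Odd N → U ∩ PCFun 2 N = ∅) ∧
      (∀ N : ℕ, (fun t => (1/2) * Set.indicator (Set.Ico (0:ℝ) 2) (fun _ => (1:ℝ)) t)
          ∈ convexHull ℝ U ∩ PCFun 2 N) ∧
      (∀ N : ℕ, Odd N → convexHull ℝ (U ∩ PCFun 2 N) ⊂ convexHull ℝ U ∩ PCFun 2 N) := by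
  refine ⟨_, rfl, ?_, stmt5_mem, ?_⟩
  · rintro N ⟨k, hk⟩
    subst hk
    ext f
    simp only [Set.mem_inter_iff, Set.mem_empty_iff_false, iff_false, not_and]
    intro hU hP
    exact stmt5_empty k f hU (by convert hP using 3)
  · rintro N hN
    have hempty : ({Set.indicator (Set.Ico (0:ℝ) 1) (fun _ => (1:ℝ)),
        Set.indicator (Set.Ico (1:ℝ) 2) (fun _ => (1:ℝ))} : Set (ℝ → ℝ)) ∩ PCFun 2 N = ∅ := by
      obtain ⟨k, hk⟩ := hN
      subst hk
      ext f
      simp only [Set.mem_inter_iff, Set.mem_empty_iff_false, iff_false, not_and]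
      intro hU hP
      exact stmt5_empty k f hU (by convert hP using 3)
    rw [hempty, convexHull_empty]
    exact Set.empty_ssubset.mpr ⟨_, stmt5_mem N⟩
end

section
/- (Finite-dimensional extended formulation for bounded variation.) Let N ∈ ℕ and σ ∈ ℕ be even. Let U(σ)_N ⊆ {0,1}^N be the set of binary vectors u (with u_0 := 0) such that Σ_{i=1}^N |u_i - u_{i-1}| ≤ σ. Then the projection to the u-coordinates of the polytope {(u,z) ∈ [0,1]^N × ℝ^N : u_i - u_{i-1} ≤ z_i - z_{i-1} for i = 1,…,N, and 0 = z_0 ≤ z_1 ≤ … ≤ z_N ≤ σ/2} equals conv(U(σ)_N). -/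
open Set

/-- The previous value `u_{i-1}` with the convention `u_0 = 0`. -/
def prevVal {N : ℕ} (u : Fin N → ℝ) (i : Fin N) : ℝ :=
  if h : (i : ℕ) = 0 then 0
  else u ⟨(i : ℕ) - 1, Nat.lt_of_le_of_lt (Nat.sub_le _ _) i.isLt⟩

/-!
Given a lift `(u, z)`, put `w = z - u`: both `z` and `w` are nondecreasing from `0`, and
`w ≤ z ≤ w + 1`. For every offset `t` the vector `⌊z_i + t⌋ - ⌊w_i + t⌋` is therefore binary,
and its variation is at most `(⌊z_N + t⌋ - ⌊t⌋) + (⌊w_N + t⌋ - ⌊t⌋) ≤ σ`, because `σ / 2`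
is an integer. As `∫₀¹ ⌊a + t⌋ dt = a`, averaging these vectors over `t` gives back `u`,
which hence lies in the closed convex hull of the binary vectors. Conversely, a binary `u`
of variation `≤ σ` has an integral number `k` of ascents with `2k ≤ σ + 1`, hence
`k ≤ σ / 2`, and its cumulative ascents lift it into the polytope, whose projection is
convex.
-/

open MeasureTheory Finset

section Sequences

variable {N : ℕ}

/-- `z` read as the sequence `z_0 = 0, z_1, …, z_N` (and `0` beyond `N`). -/
def toSeq (z : Fin N → ℝ) (k : ℕ) : ℝ :=
  if h : 0 < k ∧ k - 1 < N then z ⟨k - 1, h.2⟩ else 0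

@[simp]
lemma toSeq_zero (z : Fin N → ℝ) : toSeq z 0 = 0 := by simp [toSeq]

lemma toSeq_succ (z : Fin N → ℝ) (i : Fin N) : toSeq z (i + 1) = z i := by
  simp [toSeq]

lemma toSeq_eq_prevVal (z : Fin N → ℝ) (i : Fin N) : toSeq z i = prevVal z i := by
  unfold toSeq prevVal
  rcases Nat.eq_zero_or_pos (i : ℕ) with h | h
  · simp [h]
  · simp [h, h.ne', Nat.lt_of_le_of_lt (Nat.sub_le _ _) i.isLt]

lemma toSeq_mem {s : Set ℝ} {z : Fin N → ℝ} (h0 : 0 ∈ s) (hz : ∀ i, z i ∈ s) (k : ℕ) :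
    toSeq z k ∈ s := by
  unfold toSeq
  split_ifs
  exacts [hz _, h0]

lemma prevVal_mem {s : Set ℝ} {z : Fin N → ℝ} (h0 : 0 ∈ s) (hz : ∀ i, z i ∈ s) (i : Fin N) :
    prevVal z i ∈ s :=
  toSeq_eq_prevVal z i ▸ toSeq_mem h0 hz i

lemma prevVal_map₂ (F : ℝ → ℝ → ℝ) (hF : F 0 0 = 0) (x y : Fin N → ℝ) (i : Fin N) :
    prevVal (fun k => F (x k) (y k)) i = F (prevVal x i) (prevVal y i) := by
  unfold prevVal
  split_ifs <;> simp [hF]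

lemma sum_sub_prevVal (g : ℝ → ℝ) (z : Fin N → ℝ) :
    ∑ i, (g (z i) - g (prevVal z i)) = g (toSeq z N) - g 0 := by
  rw [← toSeq_zero z, ← Finset.sum_range_sub (fun k => g (toSeq z k)),
    ← Fin.sum_univ_eq_sum_range (fun k => g (toSeq z (k + 1)) - g (toSeq z k))]
  simp only [toSeq_succ, toSeq_eq_prevVal]

def partialSums (c : Fin N → ℝ) (i : Fin N) : ℝ :=
  ∑ m ∈ range (i + 1), toSeq c (m + 1)

lemma partialSums_sub_prevVal (c : Fin N → ℝ) (i : Fin N) :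
    partialSums c i - prevVal (partialSums c) i = c i := by
  have hprev : prevVal (partialSums c) i = ∑ m ∈ range i, toSeq c (m + 1) := by
    unfold prevVal partialSums
    split_ifs with h
    · simp [h]
    · congr 2
      simp only
      omega
  rw [hprev, partialSums, sum_range_succ, toSeq_succ, add_sub_cancel_left]

lemma partialSums_le_sum {c : Fin N → ℝ} (hc : ∀ i, 0 ≤ c i) (i : Fin N) :
    partialSums c i ≤ ∑ j, c j := by
  calc partialSums c i ≤ ∑ m ∈ range N, toSeq c (m + 1) :=
        sum_le_sum_of_subset_of_nonneg (range_subset_range.2 i.isLt)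
          fun m _ _ => toSeq_mem (s := Ici 0) self_mem_Ici hc _
    _ = ∑ j, c j := by
        rw [← Fin.sum_univ_eq_sum_range (fun m => toSeq c (m + 1))]
        simp only [toSeq_succ]

end Sequences

lemma floor_sub_floor_eq_zero_or_one {R : Type*} [Ring R] [LinearOrder R]
    [IsStrictOrderedRing R] [FloorRing R] {a b : R} (hba : b ≤ a) (hab : a ≤ b + 1) :
    ((⌊a⌋ : R) - ⌊b⌋ = 0) ∨ ((⌊a⌋ : R) - ⌊b⌋ = 1) := by
  have h1 : ⌊b⌋ ≤ ⌊a⌋ := Int.floor_mono hba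
  have h2 : ⌊a⌋ ≤ ⌊b⌋ + 1 := (Int.floor_mono hab).trans_eq (Int.floor_add_one b)
  rcases (by omega : ⌊a⌋ - ⌊b⌋ = 0 ∨ ⌊a⌋ - ⌊b⌋ = 1) with h | h
  · left; exact_mod_cast h
  · right; exact_mod_cast h

lemma intervalIntegrable_floor_add (a : ℝ) {μ : Measure ℝ} [IsLocallyFiniteMeasure μ]
    {b c : ℝ} :
    IntervalIntegrable (fun t => (⌊a + t⌋ : ℝ)) μ b c :=
  Monotone.intervalIntegrable fun _ _ h => Int.cast_mono (Int.floor_mono (add_le_add_right h a))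

lemma integral_fract_zero_one : ∫ s in (0:ℝ)..1, Int.fract s = 1 / 2 := by
  rw [intervalIntegral.integral_of_le zero_le_one, integral_Ioc_eq_integral_Ioo,
    setIntegral_congr_fun measurableSet_Ioo
      (fun s hs => Int.fract_eq_self.2 ⟨hs.1.le, hs.2⟩),
    ← integral_Ioc_eq_integral_Ioo, ← intervalIntegral.integral_of_le zero_le_one]
  simp

lemma integral_floor_add (a : ℝ) : ∫ t in (0:ℝ)..1, (⌊a + t⌋ : ℝ) = a := by
  have hfloor : IntervalIntegrable (fun s : ℝ => (⌊s⌋ : ℝ)) volume a (a + 1) :=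
    (Int.cast_mono.comp Int.floor_mono).intervalIntegrable
  have hfract : IntervalIntegrable Int.fract volume a (a + 1) :=
    (intervalIntegral.intervalIntegrable_id).sub hfloor
  calc ∫ t in (0:ℝ)..1, (⌊a + t⌋ : ℝ)
      = ∫ s in a..a + 1, (⌊s⌋ : ℝ) := by
        simpa using
          intervalIntegral.integral_comp_add_left (fun s => (⌊s⌋ : ℝ)) a (a := 0) (b := 1)
    _ = ∫ s in a..a + 1, (s - Int.fract s) := by simp [Int.self_sub_fract]
    _ = a := by
        rw [intervalIntegral.integral_sub intervalIntegral.intervalIntegrable_id hfract,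
          integral_id, (Int.fract_periodic ℝ).intervalIntegral_add_eq a 0, zero_add,
          integral_fract_zero_one]
        ring

section Polytope

variable {N : ℕ}

def liftedPolytope (N : ℕ) (c : ℝ) : Set ((Fin N → ℝ) × (Fin N → ℝ)) :=
  {p | (∀ i, p.1 i ∈ Icc (0 : ℝ) 1) ∧
    (∀ i, p.1 i - prevVal p.1 i ≤ p.2 i - prevVal p.2 i) ∧
    (∀ i, prevVal p.2 i ≤ p.2 i) ∧
    (∀ i, p.2 i ≤ c)}

def binaryBoundedVariation (N : ℕ) (s : ℝ) : Set (Fin N → ℝ) :=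
  {u | (∀ i, u i = 0 ∨ u i = 1) ∧ ∑ i, |u i - prevVal u i| ≤ s}

lemma prevVal_smul_add_smul (a b : ℝ) (x y : Fin N → ℝ) (i : Fin N) :
    prevVal (a • x + b • y) i = a * prevVal x i + b * prevVal y i :=
  prevVal_map₂ (fun s t => a * s + b * t) (by simp) x y i

lemma convex_liftedPolytope (N : ℕ) (c : ℝ) : Convex ℝ (liftedPolytope N c) := by
  rintro p ⟨hu, hΔ, hz, hc⟩ q ⟨hu', hΔ', hz', hc'⟩ a b ha hb hab
  refine ⟨fun i => ⟨?_, ?_⟩, fun i => ?_, fun i => ?_, fun i => ?_⟩ <;>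
    simp only [Prod.fst_add, Prod.snd_add, Prod.smul_fst, Prod.smul_snd,
      prevVal_smul_add_smul, Pi.add_apply, Pi.smul_apply, smul_eq_mul]
  · nlinarith [(hu i).1, (hu' i).1]
  · nlinarith [(hu i).2, (hu' i).2]
  · nlinarith [hΔ i, hΔ' i]
  · nlinarith [hz i, hz' i]
  · calc a * p.2 i + b * q.2 i ≤ a * c + b * c :=
          add_le_add (mul_le_mul_of_nonneg_left (hc i) ha) (mul_le_mul_of_nonneg_left (hc' i) hb)
      _ = c := by rw [← add_mul, hab, one_mul]

lemma posPart_sum_le_of_binary {m : ℕ} {u : Fin N → ℝ} (hu : ∀ i, u i = 0 ∨ u i = 1)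
    (hTV : ∑ i, |u i - prevVal u i| ≤ 2 * m) :
    ∑ i, max (u i - prevVal u i) 0 ≤ m := by
  have hbin : ∀ i, u i ∈ ({0, 1} : Set ℝ) := hu
  have hterm : ∀ i, max (u i - prevVal u i) 0 = if 0 < u i - prevVal u i then 1 else 0 := by
    intro i
    have hprev : prevVal u i = 0 ∨ prevVal u i = 1 := prevVal_mem (by simp) hbin i
    rcases hu i with h | h <;> rcases hprev with h' | h' <;> simp [h, h']
  obtain ⟨k, hk⟩ : ∃ k : ℕ, ∑ i, max (u i - prevVal u i) 0 = k :=
    ⟨#{i | 0 < u i - prevVal u i}, by simp only [hterm, sum_boole]⟩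
  have htwice : 2 * ∑ i, max (u i - prevVal u i) 0 = ∑ i, |u i - prevVal u i| + toSeq u N := by
    have htel := sum_sub_prevVal id u
    simp only [id, sub_zero] at htel
    rw [← htel, mul_sum, ← sum_add_distrib]
    refine sum_congr rfl fun i _ => ?_
    rcases le_total (u i - prevVal u i) 0 with h | h
    · rw [max_eq_right h, abs_of_nonpos h]; ring
    · rw [max_eq_left h, abs_of_nonneg h]; ring
  have hlast : toSeq u N ≤ 1 := toSeq_mem (s := Iic 1) (by simp) (fun i => by
    rcases hu i with h | h <;> simp [h]) N
  have hk2 : 2 * k ≤ 2 * m + 1 := by exact_mod_cast (by linarith : 2 * (k : ℝ) ≤ 2 * m + 1)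
  rw [hk]
  exact_mod_cast (by omega : k ≤ m)

lemma binaryBoundedVariation_finite (N : ℕ) (s : ℝ) : (binaryBoundedVariation N s).Finite :=
  (Set.Finite.pi' fun _ => (Set.toFinite {(0 : ℝ), 1})).subset fun _ hu => hu.1

lemma binaryBoundedVariation_subset_image_fst (m : ℕ) :
    binaryBoundedVariation N (2 * m) ⊆ Prod.fst '' liftedPolytope N m := by
  rintro u ⟨hu, hTV⟩
  set c : Fin N → ℝ := fun i => max (u i - prevVal u i) 0
  have hc : ∀ i, 0 ≤ c i := fun i => le_max_right _ _
  refine ⟨(u, partialSums c), ⟨fun i => ?_, fun i => ?_, fun i => ?_, fun i => ?_⟩, rfl⟩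
  · rcases hu i with h | h <;> simp [h]
  · rw [partialSums_sub_prevVal]
    exact le_max_left _ _
  · exact sub_nonneg.1 ((partialSums_sub_prevVal c i).symm ▸ hc i)
  · exact (partialSums_le_sum hc i).trans (posPart_sum_le_of_binary hu hTV)

noncomputable def floorRounding (z w : Fin N → ℝ) (t : ℝ) : Fin N → ℝ :=
  fun i => ⌊z i + t⌋ - ⌊w i + t⌋

lemma floorRounding_mem_binaryBoundedVariation {m : ℕ} {z w : Fin N → ℝ}
    (hwz : ∀ i, w i ≤ z i) (hzw : ∀ i, z i ≤ w i + 1)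
    (hz : ∀ i, prevVal z i ≤ z i) (hw : ∀ i, prevVal w i ≤ w i) (hzm : ∀ i, z i ≤ m)
    (t : ℝ) : floorRounding z w t ∈ binaryBoundedVariation N (2 * m) := by
  set g : ℝ → ℝ := fun x => ⌊x + t⌋
  have hg : Monotone g := fun x y hxy => Int.cast_mono (Int.floor_mono (by linarith))
  have hprev : ∀ i, prevVal (floorRounding z w t) i = g (prevVal z i) - g (prevVal w i) :=
    prevVal_map₂ (fun x y => g x - g y) (sub_self _) z w
  have hgm : ∀ x ≤ (m : ℝ), g x - g 0 ≤ m := fun x hx => by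
    have : g m = m + g 0 := by simp [g, Int.floor_natCast_add]
    linarith [hg hx]
  have hwm : ∀ i, w i ≤ m := fun i => (hwz i).trans (hzm i)
  refine ⟨fun i => floor_sub_floor_eq_zero_or_one (by linarith [hwz i]) (by linarith [hzw i]),
    ?_⟩
  calc ∑ i, |floorRounding z w t i - prevVal (floorRounding z w t) i|
      ≤ ∑ i, ((g (z i) - g (prevVal z i)) + (g (w i) - g (prevVal w i))) := by
        refine sum_le_sum fun i _ => abs_le.2 ⟨?_, ?_⟩ <;>
          · simp only [hprev, floorRounding]
            linarith [hg (hz i), hg (hw i)]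
    _ = (g (toSeq z N) - g 0) + (g (toSeq w N) - g 0) := by
        rw [sum_add_distrib, sum_sub_prevVal, sum_sub_prevVal]
    _ ≤ m + m := add_le_add (hgm _ (toSeq_mem (s := Iic (m : ℝ)) (by simp) hzm N))
        (hgm _ (toSeq_mem (s := Iic (m : ℝ)) (by simp) hwm N))
    _ = 2 * m := by ring

lemma integrableOn_floorRounding_apply (z w : Fin N → ℝ) (i : Fin N) :
    IntegrableOn (fun t => floorRounding z w t i) (Ioc 0 1) :=
  (intervalIntegrable_iff_integrableOn_Ioc_of_le zero_le_one).1
    ((intervalIntegrable_floor_add _).sub (intervalIntegrable_floor_add _))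

lemma setIntegral_floorRounding (z w : Fin N → ℝ) :
    ∫ t in Ioc (0 : ℝ) 1, floorRounding z w t = z - w := by
  funext i
  rw [eval_integral (integrableOn_floorRounding_apply z w),
    ← intervalIntegral.integral_of_le zero_le_one]
  simp only [floorRounding]
  rw [intervalIntegral.integral_sub (intervalIntegrable_floor_add _)
    (intervalIntegrable_floor_add _), integral_floor_add, integral_floor_add, Pi.sub_apply]

lemma fst_mem_convexHull_of_mem_liftedPolytope {m : ℕ} {p : (Fin N → ℝ) × (Fin N → ℝ)}
    (hp : p ∈ liftedPolytope N m) :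
    p.1 ∈ convexHull ℝ (binaryBoundedVariation N (2 * m)) := by
  obtain ⟨hu, hΔ, hz, hzm⟩ := hp
  set w := p.2 - p.1
  have hprev : ∀ i, prevVal w i = prevVal p.2 i - prevVal p.1 i :=
    prevVal_map₂ (fun x y => x - y) (sub_self 0) p.2 p.1
  have hw : ∀ i, prevVal w i ≤ w i := fun i => by
    rw [hprev]; simp only [w, Pi.sub_apply]; linarith [hΔ i]
  have hint : ∫ t in Ioc (0 : ℝ) 1, floorRounding p.2 w t = p.1 := by
    rw [setIntegral_floorRounding, sub_sub_cancel]
  have : IsProbabilityMeasure (volume.restrict (Ioc (0 : ℝ) 1)) := ⟨by simp⟩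
  rw [← hint]
  refine (convex_convexHull ℝ _).integral_mem
    ((binaryBoundedVariation_finite N _).isClosed_convexHull (𝕜 := ℝ))
    (ae_of_all _ fun t => subset_convexHull ℝ _ ?_)
    (integrable_pi_iff.2 (integrableOn_floorRounding_apply p.2 w))
  exact floorRounding_mem_binaryBoundedVariation
    (fun i => by simp [w, (hu i).1])
    (fun i => by simp only [w, Pi.sub_apply]; linarith [(hu i).2]) hz hw hzm t

end Polytope

/-- Finite-dimensional extended formulation for bounded variation: for even `σ`, the
projection to the `u`-coordinates of
`{(u,z) ∈ [0,1]^N × ℝ^N : u_i - u_{i-1} ≤ z_i - z_{i-1}, 0 = z_0 ≤ z_1 ≤ … ≤ z_N ≤ σ/2}`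
equals the convex hull of the binary vectors `u` (with `u_0 = 0`) of discrete total
variation `∑ |u_i - u_{i-1}| ≤ σ`. -/
theorem stmt15 (N σ : ℕ) (hσ : Even σ) :
    Prod.fst '' {p : (Fin N → ℝ) × (Fin N → ℝ) |
        (∀ i, p.1 i ∈ Set.Icc (0:ℝ) 1) ∧
        (∀ i, p.1 i - prevVal p.1 i ≤ p.2 i - prevVal p.2 i) ∧
        (∀ i, prevVal p.2 i ≤ p.2 i) ∧
        (∀ i, p.2 i ≤ (σ : ℝ) / 2)} =
      convexHull ℝ {u : Fin N → ℝ |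
        (∀ i, u i = 0 ∨ u i = 1) ∧ ∑ i, |u i - prevVal u i| ≤ (σ : ℝ)} := by
  obtain ⟨m, rfl⟩ := hσ
  have hhalf : ((m + m : ℕ) : ℝ) / 2 = m := by push_cast; ring
  have hdouble : ((m + m : ℕ) : ℝ) = 2 * m := by push_cast; ring
  change Prod.fst '' liftedPolytope N _ = convexHull ℝ (binaryBoundedVariation N _)
  rw [hhalf, hdouble]
  refine Subset.antisymm ?_ ?_
  · rintro _ ⟨p, hp, rfl⟩
    exact fst_mem_convexHull_of_mem_liftedPolytope hp
  · exact convexHull_min (binaryBoundedVariation_subset_image_fst m)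
      ((convex_liftedPolytope N m).linear_image (LinearMap.fst ℝ _ _))
end

section
/- Let A ∈ ℚ^{m×σ}, b ∈ ℚ^m be such that At ≤ b implies 0 ≤ t_1 ≤ … ≤ t_σ ≤ T. If u ∈ BV_⋆(0,T;{0,1}) has a representative with switching points t_1,…,t_σ satisfying At ≤ b, then defining z^{(i)} := χ_{(t_i,T)} for i = 1,…,σ yields: each z^{(i)} ∈ BV_⋆(0,T;[0,1]) with Dz^{(i)} ≥ 0; z^{(i)} ≤ z^{(i-1)} for i = 2,…,σ; u = Σ_{i=1}^σ (-1)^{i+1} z^{(i)}; and ∫_0^T (1 - z^{(i)}(t)) dt = t_i for all i, so Σ_i a_{ji} ∫_0^T (1 - z^{(i)}(t)) dt ≤ b_j for all j. -/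
open MeasureTheory Set Filter

/-- A test function on an open set `Ω ⊆ ℝ`: smooth with compact support contained in `Ω`. -/
def IsTestFun (Ω : Set ℝ) (φ : ℝ → ℝ) : Prop :=
  ContDiff ℝ (⊤ : ℕ∞) φ ∧ HasCompactSupport φ ∧ tsupport φ ⊆ Ω

/-- `Du ≥ 0`: the distributional derivative of `u` is nonnegative. -/
def DistribDerivNonneg (Ω : Set ℝ) (u : ℝ → ℝ) : Prop :=
  ∀ φ : ℝ → ℝ, IsTestFun Ω φ → (∀ t, 0 ≤ φ t) →
    0 ≤ -∫ t in Ω, u t * deriv φ t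

/-- `u ∈ L²_⋆(0,T;S)`: `u ∈ L²(-∞,T)`, `u = 0` a.e. in `(-∞,0)` and `u ∈ S` a.e. in `(0,T)`. -/
def StarMem (T : ℝ) (S : Set ℝ) (u : ℝ → ℝ) : Prop :=
  MemLp u 2 (volume.restrict (Set.Iio T)) ∧
  (∀ᵐ t ∂(volume.restrict (Set.Iio T)), t < 0 → u t = 0) ∧
  (∀ᵐ t ∂(volume.restrict (Set.Iio T)), 0 < t → u t ∈ S)

/-- Linearization of switching point constraints (forward direction of Theorem 6.1):
if `u ∈ BV_⋆(0,T;{0,1})` has a representative with switching points `t₁ ≤ … ≤ t_σ`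
satisfying `At ≤ b` (where `At ≤ b` forces `0 ≤ t₁ ≤ … ≤ t_σ ≤ T`), then the functions
`z⁽ⁱ⁾ := χ_{(tᵢ,T)}` satisfy all constraints of `U(A,b)^lin`:
`z⁽ⁱ⁾ ∈ L²_⋆(0,T;[0,1])` with `Dz⁽ⁱ⁾ ≥ 0`, they are pointwise decreasing in `i`,
`u = ∑ (-1)^{i+1} z⁽ⁱ⁾`, and `∫_0^T (1 - z⁽ⁱ⁾) = tᵢ`, hence
`∑ᵢ a_{ji} ∫_0^T (1 - z⁽ⁱ⁾) ≤ b_j`. -/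
theorem stmt16 (T : ℝ) (hT : 0 < T) (m σ : ℕ)
    (A : Matrix (Fin m) (Fin σ) ℚ) (b : Fin m → ℚ)
    (hAb : ∀ s : Fin σ → ℝ, (∀ j, ∑ i, (A j i : ℝ) * s i ≤ (b j : ℝ)) →
      (∀ i, 0 ≤ s i) ∧ (∀ i j : Fin σ, i ≤ j → s i ≤ s j) ∧ (∀ i, s i ≤ T))
    (t : Fin σ → ℝ) (ht : ∀ j, ∑ i, (A j i : ℝ) * t i ≤ (b j : ℝ))
    (u : ℝ → ℝ)
    (hu : ∀ x, u x =
      ∑ i : Fin σ, (-1 : ℝ) ^ (i : ℕ) * (Set.Ioo (t i) T).indicator (fun _ => (1:ℝ)) x) :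
    (∀ i : Fin σ,
      StarMem T (Set.Icc 0 1) ((Set.Ioo (t i) T).indicator (fun _ => (1:ℝ))) ∧
      DistribDerivNonneg (Set.Iio T) ((Set.Ioo (t i) T).indicator (fun _ => (1:ℝ)))) ∧
    (∀ i j : Fin σ, i ≤ j → ∀ x,
      (Set.Ioo (t j) T).indicator (fun _ => (1:ℝ)) x ≤
        (Set.Ioo (t i) T).indicator (fun _ => (1:ℝ)) x) ∧
    (∀ i : Fin σ,
      (∫ x in Set.Ioo (0:ℝ) T, (1 - (Set.Ioo (t i) T).indicator (fun _ => (1:ℝ)) x)) = t i) ∧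
    (∀ j, ∑ i : Fin σ, (A j i : ℝ) *
      ∫ x in Set.Ioo (0:ℝ) T, (1 - (Set.Ioo (t i) T).indicator (fun _ => (1:ℝ)) x) ≤ (b j : ℝ)) := by

  obtain ⟨ht0, htmono, htT⟩ := hAb t ht
  -- key integral computation
  have hint : ∀ i : Fin σ,
      (∫ x in Set.Ioo (0:ℝ) T, (1 - (Set.Ioo (t i) T).indicator (fun _ => (1:ℝ)) x)) = t i := by
    intro i
    have hmeas : MeasurableSet (Set.Ioo (t i) T) := measurableSet_Ioo
    have hfin : volume (Set.Ioo (0:ℝ) T) < ⊤ := by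
      simp [Real.volume_Ioo]
    have hind : IntegrableOn ((Set.Ioo (t i) T).indicator (fun _ => (1:ℝ))) (Set.Ioo 0 T) := by
      refine (integrable_indicator_iff hmeas).2 ?_
      refine integrableOn_const (ne_of_lt ?_) (by simp)
      rw [Measure.restrict_apply hmeas]
      exact lt_of_le_of_lt (measure_mono Set.inter_subset_right) hfin
    have hone : IntegrableOn (fun _ : ℝ => (1:ℝ)) (Set.Ioo 0 T) :=
      integrableOn_const hfin.ne (by simp)
    rw [integral_sub hone hind, setIntegral_const, setIntegral_indicator hmeas,
      setIntegral_const]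
    have hcap : Set.Ioo (0:ℝ) T ∩ Set.Ioo (t i) T = Set.Ioo (t i) T := by
      apply Set.inter_eq_right.2
      intro x hx
      exact ⟨lt_of_le_of_lt (ht0 i) hx.1, hx.2⟩
    rw [hcap]
    simp only [smul_eq_mul, mul_one, Real.volume_Ioo, sub_zero]
    rw [Real.volume_real_Ioo_of_le hT.le, Real.volume_real_Ioo_of_le (htT i)]
    ring
  refine ⟨?_, ?_, hint, ?_⟩
  · intro i
    have hmeas : MeasurableSet (Set.Ioo (t i) T) := measurableSet_Ioo
    constructor
    · refine ⟨?_, ?_, ?_⟩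
      · refine memLp_indicator_const 2 hmeas 1 (Or.inr ?_)
        rw [Measure.restrict_apply hmeas]
        refine ne_of_lt (lt_of_le_of_lt (measure_mono Set.inter_subset_left) ?_)
        simp [Real.volume_Ioo]
      · filter_upwards with x hx
        apply Set.indicator_of_notMem
        intro hmem
        exact absurd (lt_of_le_of_lt (ht0 i) hmem.1) (not_lt.2 hx.le)
      · filter_upwards with x _
        by_cases hx : x ∈ Set.Ioo (t i) T
        · rw [Set.indicator_of_mem hx]; exact ⟨zero_le_one, le_refl 1⟩
        · rw [Set.indicator_of_notMem hx]; exact ⟨le_refl 0, zero_le_one⟩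
    · intro φ hφ hφ0
      obtain ⟨hsm, hcs, hsupp⟩ := hφ
      have hφT : φ T = 0 := by
        apply image_eq_zero_of_notMem_tsupport
        intro hmem
        exact absurd (hsupp hmem) (by simp)
      have heq : ∀ x, (Set.Ioo (t i) T).indicator (fun _ => (1:ℝ)) x * deriv φ x
          = (Set.Ioo (t i) T).indicator (deriv φ) x := by
        intro x
        by_cases hx : x ∈ Set.Ioo (t i) T
        · rw [Set.indicator_of_mem hx, Set.indicator_of_mem hx]; ring
        · rw [Set.indicator_of_notMem hx, Set.indicator_of_notMem hx]; ring
      have hderivc : Continuous (deriv φ) := hsm.continuous_deriv (by simp)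
      have h1 : (∫ x in Set.Iio T, (Set.Ioo (t i) T).indicator (fun _ => (1:ℝ)) x * deriv φ x)
          = ∫ x in Set.Ioo (t i) T, deriv φ x := by
        simp_rw [heq]
        rw [setIntegral_indicator measurableSet_Ioo]
        rw [show Set.Iio T ∩ Set.Ioo (t i) T = Set.Ioo (t i) T from
          Set.inter_eq_right.2 (fun x hx => hx.2)]
      rw [h1]
      rcases le_or_gt T (t i) with hTi | hTi
      · rw [Set.Ioo_eq_empty (not_lt.2 hTi)]
        simp
      · have : (∫ x in Set.Ioo (t i) T, deriv φ x) = φ T - φ (t i) := by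
          rw [← integral_Ioc_eq_integral_Ioo,
            ← intervalIntegral.integral_of_le hTi.le]
          exact intervalIntegral.integral_deriv_eq_sub
            (fun x _ => (hsm.differentiable (by simp)).differentiableAt)
            (hderivc.intervalIntegrable _ _)
        rw [this, hφT]
        simp [hφ0 (t i)]
  · intro i j hij x
    refine Set.indicator_le_indicator_of_subset ?_ (fun a => zero_le_one) x
    intro y hy
    exact ⟨lt_of_le_of_lt (htmono i j hij) hy.1, hy.2⟩
  · intro j
    calc ∑ i : Fin σ, (A j i : ℝ) *
        ∫ x in Set.Ioo (0:ℝ) T, (1 - (Set.Ioo (t i) T).indicator (fun _ => (1:ℝ)) x)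
        = ∑ i : Fin σ, (A j i : ℝ) * t i := by
          apply Finset.sum_congr rfl
          intro i _
          rw [hint i]
      _ ≤ (b j : ℝ) := ht j
end

section
/- Binary program feasibility reduces to nonemptiness of a discretized switching-point-constrained set: given B ∈ ℚ^{m×n} and d ∈ ℚ^m, set T = n, σ = 2n, N = n, and let U(A,b)_N consist of piecewise constant binary functions u on the grid {0,1,…,n} starting at 0 whose switching points t_1,…,t_{2n} satisfy t_{2i-1} = i-1, i-1 ≤ t_{2i} ≤ i, and B·(t_{2i} - (i-1))_{i=1}^n ≤ d. Then U(A,b)_N ≠ ∅ if and only if there exists x ∈ {0,1}^n with Bx ≤ d. Consequently, deciding U(A,b)_N ≠ ∅ (with T, σ, m, A, b, N part of the input) is NP-complete. -/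
open Set

/-- Reduction of binary program feasibility (BPF) to nonemptiness of the discretized
switching-point-constrained set `U(A,b)_N` with `T = n`, `σ = 2n`, `N = n`: the odd
switching points are fixed at `t_{2i-1} = i-1`, the even ones satisfy
`i-1 ≤ t_{2i} ≤ i` together with `B·(t_{2i}-(i-1)) ≤ d`; on the grid `{0,1,…,n}` every
switching point is an integer, so `x_i := t_{2i}-(i-1) ∈ {0,1}`.  Hence `U(A,b)_N ≠ ∅`
iff there is `x ∈ {0,1}^n` with `Bx ≤ d`.  (Here the free even switching points are
indexed by `i : Fin n`, i.e. `t i` stands for `t_{2(i+1)} ∈ [i, i+1]`.) -/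
theorem stmt18 (n m : ℕ) (B : Matrix (Fin m) (Fin n) ℚ) (d : Fin m → ℚ) :
    (∃ t : Fin n → ℝ,
      (∀ i : Fin n, (i : ℝ) ≤ t i ∧ t i ≤ (i : ℝ) + 1) ∧
      (∀ i : Fin n, ∃ k : ℤ, t i = (k : ℝ)) ∧
      (∀ j, ∑ i, (B j i : ℝ) * (t i - (i : ℝ)) ≤ (d j : ℝ))) ↔
    (∃ x : Fin n → ℝ, (∀ i, x i = 0 ∨ x i = 1) ∧
      ∀ j, ∑ i, (B j i : ℝ) * x i ≤ (d j : ℝ)) := by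
  constructor
  · rintro ⟨t, hbd, hint, hle⟩
    refine ⟨fun i => t i - (i : ℝ), fun i => ?_, fun j => by simpa using hle j⟩
    obtain ⟨k, hk⟩ := hint i
    obtain ⟨h1, h2⟩ := hbd i
    have hik : ∃ ki : ℤ, (i : ℝ) = (ki : ℝ) := ⟨(i : ℤ), by push_cast; ring⟩
    obtain ⟨ki, hki⟩ := hik
    dsimp only
    rw [hk, hki] at h1 h2 ⊢
    have h1' : ki ≤ k := by exact_mod_cast h1
    have h2' : k ≤ ki + 1 := by exact_mod_cast (by push_cast at h2 ⊢; linarith : (k:ℝ) ≤ (ki:ℝ)+1)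
    rcases (by omega : k = ki ∨ k = ki + 1) with h | h <;> subst h
    · left; push_cast; ring
    · right; push_cast; ring
  · rintro ⟨x, hx, hle⟩
    refine ⟨fun i => x i + (i : ℝ), fun i => ?_, fun i => ?_, fun j => by simpa using hle j⟩
    · rcases hx i with h | h <;> simp [h] <;> linarith
    · rcases hx i with h | h
      · exact ⟨(i : ℤ), by dsimp only; rw [h]; push_cast; ring⟩
      · exact ⟨(i : ℤ) + 1, by dsimp only; rw [h]; push_cast; ring⟩
end

section
/- For every odd γ ∈ ℕ, the fractional vertex cover problem with denominator γ is NP-complete: given a simple graph G = (V,E) and K ∈ ℚ, decide whether there exists x ∈ ℚ^V with Σ_{v∈V} x_v ≤ K, x_v + x_w ≥ 1 for all (v,w) ∈ E, x_v ∈ [0,1], and γ·x_v ∈ ℤ for all v. In particular, the reduction from ordinary vertex cover works as follows: construct G from G' = (V',E') by attaching to each v ∈ V' a triangle {v^(1),v^(2),v^(3)} connected to v by the edge (v,v^(1)); then G' has a vertex cover of size ≤ K' if and only if the constructed fractional instance with K = K'/γ + 2|V'| is feasible. -/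
open Finset

/-- The relation defining the gadget graph `G` built from `G' = (V',E')`: keep all edges of
`G'`, and for each `v ∈ V'` attach a triangle `v⁽¹⁾ = (v,0), v⁽²⁾ = (v,1), v⁽³⁾ = (v,2)`
connected to `v` by the bridge `(v, v⁽¹⁾)`. -/
def gadgetRel {V' : Type} (G' : SimpleGraph V') :
    (V' ⊕ V' × Fin 3) → (V' ⊕ V' × Fin 3) → Prop
  | Sum.inl v, Sum.inl w => G'.Adj v w
  | Sum.inl v, Sum.inr (w, a) => v = w ∧ a = 0
  | Sum.inr (v, a), Sum.inl w => v = w ∧ a = 0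
  | Sum.inr (v, a), Sum.inr (w, b) => v = w ∧ a ≠ b

/-!
Write `γ = 2m + 1`. A vertex cover `S` of `G'` gives the weights `(m+1)/γ` on `S` and on the
first two triangle vertices of every gadget, and `m/γ` elsewhere. The heavy vertices cover
every edge of the gadget graph and the two weights sum to `1`, so all edge constraints hold,
and the total weight is `2|V'| + |S|/γ`.

Conversely, a triangle forces weight at least `3/2` on its three vertices, and a weight in
`(1/γ)ℤ` can never equal a half-odd integer because `γ` is odd, so each triangle carries at least
`3/2 + 1/(2γ)` and each `v` with `x_v ≥ 1/2` carries at least `1/2 + 1/(2γ)`. Hence every gadget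
weighs at least `2`, and at least `2 + 1/γ` when `x_v ≥ 1/2`. The set `{v | x_v ≥ 1/2}` is a
vertex cover of `G'`, and comparing with the bound `K'/γ + 2|V'|` shows it has at most `K'`
elements.
-/

lemma add_one_div_two_mul_le_of_odd {γ : ℕ} (hγ : Odd γ) {j k : ℤ} (hj : Odd j)
    (h : (j : ℚ) / 2 ≤ k / γ) : (j : ℚ) / 2 + 1 / (2 * γ) ≤ k / γ := by
  have hγpos : (0 : ℚ) < γ := by exact_mod_cast hγ.pos
  have hle : j * γ ≤ 2 * k := by
    rw [div_le_div_iff₀ two_pos hγpos] at h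
    have : (j * γ : ℚ) ≤ 2 * k := by linarith
    exact_mod_cast this
  have hne : j * γ ≠ 2 * k := fun he =>
    Int.not_even_iff_odd.mpr (he ▸ hj.mul (Int.odd_coe_nat γ |>.mpr hγ)) (even_two_mul k)
  have hlt : (j * γ + 1 : ℚ) ≤ 2 * k := by exact_mod_cast lt_of_le_of_ne hle hne
  calc (j : ℚ) / 2 + 1 / (2 * γ) = (j * γ + 1) / (2 * γ) := by field_simp
    _ ≤ 2 * k / (2 * γ) := by gcongr
    _ = k / γ := by field_simp

lemma sum_ite_mem_const {α R : Type*} [Fintype α] [DecidableEq α] [Ring R] (T : Finset α)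
    (a b : R) :
    ∑ u, (if u ∈ T then a else b) = T.card * a + (Fintype.card α - T.card) * b := by
  rw [Finset.sum_ite, Finset.sum_const, Finset.sum_const, Finset.filter_mem_eq_inter,
    Finset.univ_inter, Finset.filter_not, Finset.filter_mem_eq_inter, Finset.univ_inter,
    ← Finset.compl_eq_univ_sdiff, Finset.card_compl, nsmul_eq_mul, nsmul_eq_mul,
    Nat.cast_sub (Finset.card_le_univ T)]

lemma block_weight_bound {γ : ℕ} (hγ : Odd γ) {y y₀ y₁ y₂ : ℚ} (hy : ∃ k : ℤ, y = k / γ)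
    (htri : ∃ k : ℤ, y₀ + y₁ + y₂ = k / γ) (hbridge : 1 ≤ y + y₀) (h₀₁ : 1 ≤ y₀ + y₁)
    (h₀₂ : 1 ≤ y₀ + y₂) (h₁₂ : 1 ≤ y₁ + y₂) :
    (if 1 / 2 ≤ y then 2 + 1 / (γ : ℚ) else 2) ≤ y + (y₀ + y₁ + y₂) := by
  split_ifs with hhalf
  · obtain ⟨k, rfl⟩ := hy
    obtain ⟨l, hl⟩ := htri
    have hv := add_one_div_two_mul_le_of_odd hγ (j := 1) odd_one (by simpa using hhalf)
    have ht := add_one_div_two_mul_le_of_odd hγ (j := 3) (by decide)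
      (by rw [← hl]; push_cast; linarith)
    have hhalves : 1 / (2 * (γ : ℚ)) + 1 / (2 * γ) = 1 / γ := by field_simp; ring
    rw [← hl] at ht
    push_cast at hv ht
    linarith
  · linarith

section Gadget

variable {V' : Type} (G' : SimpleGraph V')

open SimpleGraph Sum

lemma gadget_adj_inl {v w : V'} (h : G'.Adj v w) :
    (fromRel (gadgetRel G')).Adj (inl v) (inl w) :=
  ⟨by simpa using h.ne, Or.inl h⟩

lemma gadget_adj_bridge (v : V') : (fromRel (gadgetRel G')).Adj (inl v) (inr (v, 0)) :=
  ⟨by simp, Or.inl ⟨rfl, rfl⟩⟩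

lemma gadget_adj_triangle (v : V') {a b : Fin 3} (hab : a ≠ b) :
    (fromRel (gadgetRel G')).Adj (inr (v, a)) (inr (v, b)) :=
  ⟨by simp [hab], Or.inl ⟨rfl, hab⟩⟩

variable [Fintype V']

def liftCover (S : Finset V') : Finset (V' ⊕ V' × Fin 3) :=
  S.disjSum (univ ×ˢ {0, 1})

lemma card_liftCover (S : Finset V') : (liftCover S).card = S.card + 2 * Fintype.card V' := by
  simp [liftCover, card_disjSum, card_product, mul_comm]

variable {G'} in
lemma liftCover_covers {S : Finset V'} (hS : ∀ v w, G'.Adj v w → v ∈ S ∨ w ∈ S)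
    (u w : V' ⊕ V' × Fin 3) (h : (fromRel (gadgetRel G')).Adj u w) :
    u ∈ liftCover S ∨ w ∈ liftCover S := by
  rcases u with v | ⟨v, a⟩ <;> rcases w with w | ⟨w, b⟩ <;> obtain ⟨-, hrel⟩ := h <;>
    simp [liftCover, gadgetRel] at hrel ⊢
  case inl.inl => exact hrel.elim (hS v w) fun h => (hS w v h).symm
  all_goals omega

lemma gadget_feasible_of_isCover {γ : ℕ} (hγ : Odd γ) {K' : ℕ} {S : Finset V'}
    (hcard : S.card ≤ K') (hS : ∀ v w, G'.Adj v w → v ∈ S ∨ w ∈ S) :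
    ∃ x : (V' ⊕ V' × Fin 3) → ℚ,
      (∑ v : V' ⊕ V' × Fin 3, x v ≤ (K' : ℚ) / γ + 2 * (Fintype.card V' : ℚ)) ∧
      (∀ v w, (fromRel (gadgetRel G')).Adj v w → 1 ≤ x v + x w) ∧
      (∀ v, 0 ≤ x v ∧ x v ≤ 1) ∧
      (∀ v, ∃ k : ℤ, x v = (k : ℚ) / γ) := by
  classical
  obtain ⟨m, hm⟩ := hγ
  have hγpos : (0 : ℚ) < γ := by rw [hm]; positivity
  have hsum_one : (m + 1 : ℚ) / γ + m / γ = 1 := by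
    rw [← add_div, div_eq_one_iff_eq hγpos.ne', hm]; push_cast; ring
  have hlow_le_high : (m : ℚ) / γ ≤ (m + 1) / γ := by gcongr; linarith
  have hlow_nonneg : (0 : ℚ) ≤ m / γ := by positivity
  refine ⟨fun u => if u ∈ liftCover S then (m + 1 : ℚ) / γ else m / γ, ?_, ?_, ?_, ?_⟩
  · have hK : (S.card : ℚ) / γ ≤ K' / γ := by gcongr
    have hweight : ((liftCover S).card : ℚ) * ((m + 1) / γ)
        + (Fintype.card (V' ⊕ V' × Fin 3) - (liftCover S).card) * (m / γ)
        = S.card / γ + 2 * Fintype.card V' := by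
      rw [card_liftCover, Fintype.card_sum, Fintype.card_prod, Fintype.card_fin]
      field_simp
      rw [hm]
      push_cast
      ring
    rw [sum_ite_mem_const, hweight]
    linarith
  · intro u w h
    have := liftCover_covers hS u w h
    dsimp only
    split_ifs at this ⊢ <;> simp_all <;> linarith
  · intro u
    dsimp only
    split_ifs <;> constructor <;> linarith
  · intro u
    dsimp only
    split_ifs
    exacts [⟨m + 1, by push_cast; rfl⟩, ⟨m, rfl⟩]

def roundCover (x : V' ⊕ V' × Fin 3 → ℚ) : Finset V' :=
  univ.filter fun v => 1 / 2 ≤ x (inl v)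

variable {G'} {x : V' ⊕ V' × Fin 3 → ℚ}
  (hedge : ∀ v w, (fromRel (gadgetRel G')).Adj v w → 1 ≤ x v + x w)
include hedge

lemma roundCover_covers (v w : V') (h : G'.Adj v w) : v ∈ roundCover x ∨ w ∈ roundCover x := by
  by_contra! hc
  simp only [roundCover, mem_filter, mem_univ, true_and, not_le] at hc
  linarith [hedge _ _ (gadget_adj_inl G' h)]

lemma two_mul_card_add_card_roundCover_div_le_sum {γ : ℕ} (hγ : Odd γ)
    (hint : ∀ v, ∃ k : ℤ, x v = (k : ℚ) / γ) :
    2 * Fintype.card V' + (roundCover x).card / γ ≤ ∑ u, x u := by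
  classical
  have hblock (v : V') : (if v ∈ roundCover x then 2 + 1 / (γ : ℚ) else 2)
      ≤ x (inl v) + ∑ a, x (inr (v, a)) := by
    have htri : ∃ k : ℤ, x (inr (v, 0)) + x (inr (v, 1)) + x (inr (v, 2)) = k / γ := by
      obtain ⟨k₀, h₀⟩ := hint (inr (v, 0))
      obtain ⟨k₁, h₁⟩ := hint (inr (v, 1))
      obtain ⟨k₂, h₂⟩ := hint (inr (v, 2))
      exact ⟨k₀ + k₁ + k₂, by rw [h₀, h₁, h₂]; push_cast; ring⟩
    simp only [roundCover, mem_filter, mem_univ, true_and, Fin.sum_univ_three]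
    exact block_weight_bound hγ (hint _) htri (hedge _ _ (gadget_adj_bridge G' v))
      (hedge _ _ (gadget_adj_triangle G' v (by decide)))
      (hedge _ _ (gadget_adj_triangle G' v (by decide)))
      (hedge _ _ (gadget_adj_triangle G' v (by decide)))
  calc 2 * Fintype.card V' + (roundCover x).card / (γ : ℚ)
      = ∑ v, (if v ∈ roundCover x then 2 + 1 / (γ : ℚ) else 2) := by
        rw [sum_ite_mem_const]; ring
    _ ≤ ∑ v, (x (inl v) + ∑ a, x (inr (v, a))) := sum_le_sum fun v _ => hblock v
    _ = ∑ u, x u := by rw [Fintype.sum_sum_type, Fintype.sum_prod_type, sum_add_distrib]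

end Gadget

theorem stmt19_general (γ : ℕ) (hγ : Odd γ) {V' : Type} [Fintype V']
    (G' : SimpleGraph V') (K' : ℕ) :
    (∃ S : Finset V', S.card ≤ K' ∧ ∀ v w : V', G'.Adj v w → v ∈ S ∨ w ∈ S) ↔
    (∃ x : (V' ⊕ V' × Fin 3) → ℚ,
      (∑ v : V' ⊕ V' × Fin 3, x v ≤ (K' : ℚ) / γ + 2 * (Fintype.card V' : ℚ)) ∧
      (∀ v w, (SimpleGraph.fromRel (gadgetRel G')).Adj v w → 1 ≤ x v + x w) ∧
      (∀ v, 0 ≤ x v ∧ x v ≤ 1) ∧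
      (∀ v, ∃ k : ℤ, x v = (k : ℚ) / γ)) := by
  constructor
  · rintro ⟨S, hcard, hS⟩
    exact gadget_feasible_of_isCover G' hγ hcard hS
  · rintro ⟨x, hsum, hedge, -, hint⟩
    refine ⟨roundCover x, ?_, roundCover_covers hedge⟩
    have hlower := two_mul_card_add_card_roundCover_div_le_sum hedge hγ hint
    have hγpos : (0 : ℚ) < γ := by exact_mod_cast hγ.pos
    have hle : ((roundCover x).card : ℚ) / γ ≤ K' / γ := by linarith
    exact_mod_cast (div_le_div_iff_of_pos_right hγpos).mp hle

/-- Correctness of the reduction from vertex cover to fractional vertex cover with odd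
denominator `γ`: `G'` has a vertex cover of size at most `K'` iff the fractional vertex
cover instance (`γ`-VC) on the gadget graph `G` with bound `K = K'/γ + 2|V'|` is feasible,
i.e. admits `x : V → ℚ` with `∑ x_v ≤ K`, `x_v + x_w ≥ 1` on edges, `x_v ∈ [0,1]` and
`γ·x_v ∈ ℤ`. -/
theorem stmt19 (γ : ℕ) (hγ : Odd γ) {V' : Type} [Fintype V'] [DecidableEq V']
    (G' : SimpleGraph V') (K' : ℕ) :
    (∃ S : Finset V', S.card ≤ K' ∧ ∀ v w : V', G'.Adj v w → v ∈ S ∨ w ∈ S) ↔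
    (∃ x : (V' ⊕ V' × Fin 3) → ℚ,
      (∑ v : V' ⊕ V' × Fin 3, x v ≤ (K' : ℚ) / γ + 2 * (Fintype.card V' : ℚ)) ∧
      (∀ v w, (SimpleGraph.fromRel (gadgetRel G')).Adj v w → 1 ≤ x v + x w) ∧
      (∀ v, 0 ≤ x v ∧ x v ≤ 1) ∧
      (∀ v, ∃ k : ℤ, x v = (k : ℚ) / γ)) :=
  stmt19_general γ hγ G' K'
end
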